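/- Let X and Y be sets and let g be a function from X to the Y-processes over A. Define g†(P) = (T, F) for each X-process P by T = {v ∈ T_P | v a list over A} ∪ {vw | vx ∈ T_P for some x ∈ X, w ∈ T_{g(x)}} and F = F_P ∪ {(vw, W) | vx ∈ T_P for some x ∈ X, (w,W) ∈ F_{g(x)}}. Then: (i) g†(P) is a Y-process, and it is finitary whenever P is finitary and g(x) is finitary for every x with an X-trace in T_P; (ii) g†(η(x)) = g(x) for all x ∈ X; (iii) g† is a homomorphism: g†(P ⊓ Q) = g†(P) ⊓ g†(Q), g†(□_{a⃗}(P₁,…,Pₙ)) = □_{a⃗}(g†(P₁),…,g†(Pₙ)) and g†(□^Ω_{a⃗}(P₁,…,Pₙ)) = □^Ω_{a⃗}(g†(P₁),…,g†(Pₙ)); and (iv) g† is the unique such map on finitary X-processes: if h maps finitary X-processes to Y-processes, h(η(x)) = g(x) for all x ∈ X, and h preserves ⊓, □_{a⃗} and □^Ω_{a⃗}, then h(P) = g†(P) for every finitary X-process P. -/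

import Mathlib

namespace CSP

variable {A X : Type*}

/-- An `X`-process candidate over `A`: its trace set contains plain traces
`(w, none)` and `X`-traces `(w, some x)`, and its failure pairs `(w, W)` have
`W ⊆ A` possibly infinite. -/
abbrev XProc (A X : Type*) := Set (List A × Option X) × Set (List A × Set A)

/-- Conditions (1)–(5), together with `X`-trace prefix closure, making a pair
`(T, F)` an `X`-process. -/
structure IsXProc (P : XProc A X) : Prop where
  nil_mem : ([], (none : Option X)) ∈ P.1
  prefix_closed : ∀ (w : List A) (a : A),
    (w ++ [a], (none : Option X)) ∈ P.1 → (w, (none : Option X)) ∈ P.1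
  xtrace_closed : ∀ (w : List A) (x : X),
    (w, some x) ∈ P.1 → (w, (none : Option X)) ∈ P.1
  fail_trace : ∀ (w : List A) (W : Set A),
    (w, W) ∈ P.2 → (w, (none : Option X)) ∈ P.1
  subset_closed : ∀ (w : List A) (W V : Set A),
    (w, W) ∈ P.2 → V ⊆ W → (w, V) ∈ P.2
  ext_closed : ∀ (w : List A) (W V : Set A), (w, W) ∈ P.2 →
    (∀ a ∈ V, (w ++ [a], (none : Option X)) ∉ P.1) → (w, W ∪ V) ∈ P.2

/-- An `X`-process is finitary when its trace set is finite. -/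
def XFinitary (P : XProc A X) : Prop := P.1.Finite

/-- The unit `η(x) = ({ε, εx}, ∅)`. -/
def xeta (A : Type*) {X : Type*} (x : X) : XProc A X :=
  ({([], none), ([], some x)}, ∅)

/-- Divergence `Ω = ({ε}, ∅)`. -/
def xomega (A X : Type*) : XProc A X := ({([], none)}, ∅)

/-- Internal choice `P ⊓ Q`. -/
def xintc (P Q : XProc A X) : XProc A X := (P.1 ∪ Q.1, P.2 ∪ Q.2)

/-- Deterministic external choice `□_{a⃗}(P₁,…,Pₙ)`, given as a list of
action/process pairs (the actions are required to be pairwise distinct via a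
`Nodup` hypothesis wherever this operation is used). -/
def xdet (cs : List (A × XProc A X)) : XProc A X :=
  ({([], none)} ∪ {t | ∃ c ∈ cs, ∃ s ∈ c.2.1, t = (c.1 :: s.1, s.2)},
   {p | p.1 = [] ∧ ∀ c ∈ cs, c.1 ∉ p.2} ∪
   {p | ∃ c ∈ cs, ∃ w, p.1 = c.1 :: w ∧ (w, p.2) ∈ c.2.2})

/-- Deterministic external choice with an `Ω`-summand `□^Ω_{a⃗}(P₁,…,Pₙ)`. -/
def xdetO (cs : List (A × XProc A X)) : XProc A X :=
  ({([], none)} ∪ {t | ∃ c ∈ cs, ∃ s ∈ c.2.1, t = (c.1 :: s.1, s.2)},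
   {p | ∃ c ∈ cs, ∃ w, p.1 = c.1 :: w ∧ (w, p.2) ∈ c.2.2})

/-- The Kleisli extension `g†` of a map `g` from `X` to `Y`-processes. -/
def dagger {A X Y : Type*} (g : X → XProc A Y) (P : XProc A X) : XProc A Y :=
  ({t | t.2 = none ∧ (t.1, (none : Option X)) ∈ P.1} ∪
     {t | ∃ (v : List A) (x : X), (v, some x) ∈ P.1 ∧
            ∃ s ∈ (g x).1, t = (v ++ s.1, s.2)},
   P.2 ∪
     {p | ∃ (v : List A) (x : X) (w : List A), (v, some x) ∈ P.1 ∧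
            (w, p.2) ∈ (g x).2 ∧ p.1 = v ++ w})

/-!
`g†` acts trace by trace, replacing a terminal `x` by the behaviour `g x`. Hence it preserves
arbitrary unions of trace and failure sets, fixes divergence `Ω` and sets of initial refusals, and
commutes with prefixing by an action; as `□^Ω` is `Ω` together with the prefixed branches and `□`
only adds initial refusals, the homomorphism laws follow.

For uniqueness, a finitary process `P` with initial actions `I` is the internal choice of
`□^Ω_{a ∈ I} (P/a)`, of `□_{a ∈ I \ R} (P/a)` for every initial refusal `R ⊆ I`, and of `η x` for
every `X`-trace `εx` of `P`. Every derivative `P/a` (`after P a` below) has fewer traces than `P`,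
so induction on the number of traces shows that a homomorphism extending `g` agrees with `g†`
on `P`.
-/

section

variable {Y : Type*}

def xprefix (a : A) (P : XProc A X) : XProc A X :=
  ((fun s => (a :: s.1, s.2)) '' P.1, (fun p => (a :: p.1, p.2)) '' P.2)

theorem xdetO_map_eq_sup (f : XProc A X → XProc A Y) (cs : List (A × XProc A X)) :
    xdetO (cs.map fun c => (c.1, f c.2)) = xomega A Y ⊔ ⨆ c ∈ cs, xprefix c.1 (f c.2) := by
  ext ⟨w, o⟩ <;> simp [xdetO, xomega, xprefix, Prod.fst_iSup, Prod.snd_iSup] <;> aesop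

theorem xdet_eq_sup (cs : List (A × XProc A X)) :
    xdet cs = (∅, {p | p.1 = [] ∧ ∀ c ∈ cs, c.1 ∉ p.2}) ⊔ xdetO cs :=
  Prod.ext (Set.empty_union _).symm rfl

-- `xintc P Q` is by definition `P ⊔ Q` in the product lattice `Set _ × Set _`.
theorem dagger_sup (g : X → XProc A Y) (P Q : XProc A X) :
    dagger g (P ⊔ Q) = dagger g P ⊔ dagger g Q := by
  ext ⟨w, o⟩ <;> simp only [dagger, Prod.fst_sup, Prod.snd_sup, Set.sup_eq_union,
    Set.mem_union, Set.mem_ofPred_eq] <;> aesop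

theorem dagger_iSup {ι : Sort*} (g : X → XProc A Y) (P : ι → XProc A X) :
    dagger g (⨆ i, P i) = ⨆ i, dagger g (P i) := by
  ext ⟨w, o⟩ <;> simp [dagger, Prod.fst_iSup, Prod.snd_iSup] <;> aesop

theorem dagger_xprefix (g : X → XProc A Y) (a : A) (P : XProc A X) :
    dagger g (xprefix a P) = xprefix a (dagger g P) := by
  ext ⟨w, o⟩ <;> simp [dagger, xprefix] <;> aesop

theorem dagger_xomega (g : X → XProc A Y) : dagger g (xomega A X) = xomega A Y := by
  ext ⟨w, o⟩ <;> simp [dagger, xomega, and_comm]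

theorem dagger_empty_fst (g : X → XProc A Y) (F : Set (List A × Set A)) :
    dagger g (∅, F) = (∅, F) := by
  ext ⟨w, o⟩ <;> simp [dagger]

theorem dagger_xeta (g : X → XProc A Y) (hg : ∀ x, IsXProc (g x)) (x : X) :
    dagger g (xeta A x) = g x := by
  ext ⟨w, o⟩ <;> simp [dagger, xeta]
  rintro rfl rfl
  exact (hg x).nil_mem

theorem dagger_xdetO (g : X → XProc A Y) (cs : List (A × XProc A X)) :
    dagger g (xdetO cs) = xdetO (cs.map fun c => (c.1, dagger g c.2)) := by
  have hcs : xdetO cs = xomega A X ⊔ ⨆ c ∈ cs, xprefix c.1 c.2 := by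
    simpa using xdetO_map_eq_sup id cs
  simp only [hcs, xdetO_map_eq_sup, dagger_sup, dagger_iSup, dagger_xomega, dagger_xprefix]

theorem dagger_xdet (g : X → XProc A Y) (cs : List (A × XProc A X)) :
    dagger g (xdet cs) = xdet (cs.map fun c => (c.1, dagger g c.2)) := by
  rw [xdet_eq_sup, xdet_eq_sup, dagger_sup, dagger_empty_fst, dagger_xdetO]
  simp only [List.forall_mem_map]

theorem dagger_foldr_sup (g : X → XProc A Y) (p : XProc A X) (l : List (XProc A X)) :
    dagger g (l.foldr (· ⊔ ·) p) = (l.map (dagger g)).foldr (· ⊔ ·) (dagger g p) := by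
  induction l with
  | nil => rfl
  | cons q l ih => rw [List.foldr_cons, dagger_sup, ih]; rfl

theorem IsXProc.mem_fst_none {P : XProc A X} (hP : IsXProc P) {w : List A} :
    ∀ {o : Option X}, (w, o) ∈ P.1 → (w, none) ∈ P.1
  | none, h => h
  | some x, h => hP.xtrace_closed w x h

theorem IsXProc.mem_of_append_mem {P : XProc A X} (hP : IsXProc P) {u v : List A}
    (h : (u ++ v, (none : Option X)) ∈ P.1) : (u, (none : Option X)) ∈ P.1 := by
  induction v using List.reverseRecOn with
  | nil => simpa using h
  | append_singleton v a ih => exact ih (hP.prefix_closed _ a (by simpa using h))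

theorem IsXProc.sup {P Q : XProc A X} (hP : IsXProc P) (hQ : IsXProc Q) : IsXProc (P ⊔ Q) where
  nil_mem := Or.inl hP.nil_mem
  prefix_closed w a := Or.imp (hP.prefix_closed w a) (hQ.prefix_closed w a)
  xtrace_closed w x := Or.imp (hP.xtrace_closed w x) (hQ.xtrace_closed w x)
  fail_trace w W := Or.imp (hP.fail_trace w W) (hQ.fail_trace w W)
  subset_closed w W V h hVW :=
    h.imp (hP.subset_closed w W V · hVW) (hQ.subset_closed w W V · hVW)
  ext_closed w W V h hV := h.imp
    (hP.ext_closed w W V · fun a ha hm => hV a ha (Or.inl hm))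
    (hQ.ext_closed w W V · fun a ha hm => hV a ha (Or.inr hm))

theorem isXProc_xeta (x : X) : IsXProc (xeta A x) where
  nil_mem := Or.inl rfl
  prefix_closed w a h := by simp [xeta] at h
  xtrace_closed w x' h := by simp_all [xeta]
  fail_trace _ _ h := h.elim
  subset_closed _ _ _ h := h.elim
  ext_closed _ _ _ h := h.elim

theorem IsXProc.dagger {g : X → XProc A Y} (hg : ∀ x, IsXProc (g x)) {P : XProc A X}
    (hP : IsXProc P) : IsXProc (dagger g P) where
  nil_mem := Or.inl ⟨rfl, hP.nil_mem⟩
  prefix_closed w a := by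
    rintro (⟨-, h⟩ | ⟨v, x, hv, ⟨s, o⟩, hs, hw⟩)
    · exact Or.inl ⟨rfl, hP.prefix_closed w a h⟩
    obtain ⟨hw, rfl⟩ := Prod.mk.inj hw
    rcases List.append_eq_append_iff.1 hw with ⟨u, rfl, -⟩ | ⟨u, rfl, rfl⟩
    · exact Or.inl ⟨rfl, hP.mem_of_append_mem (hP.xtrace_closed _ x hv)⟩
    · exact Or.inr ⟨v, x, hv, (u, none), (hg x).prefix_closed u a hs, rfl⟩
  xtrace_closed w y := by
    rintro (⟨⟨⟩, -⟩ | ⟨v, x, hv, ⟨s, o⟩, hs, hw⟩)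
    obtain ⟨rfl, rfl⟩ := Prod.mk.inj hw
    exact Or.inr ⟨v, x, hv, (s, none), (hg x).xtrace_closed s y hs, rfl⟩
  fail_trace w W := by
    rintro (h | ⟨v, x, u, hv, hu, rfl⟩)
    · exact Or.inl ⟨rfl, hP.fail_trace w W h⟩
    · exact Or.inr ⟨v, x, hv, (u, none), (hg x).fail_trace u W hu, rfl⟩
  subset_closed w W V := by
    rintro (h | ⟨v, x, u, hv, hu, rfl⟩) hVW
    · exact Or.inl (hP.subset_closed w W V h hVW)
    · exact Or.inr ⟨v, x, u, hv, (hg x).subset_closed u W V hu hVW, rfl⟩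
  ext_closed w W V := by
    rintro (h | ⟨v, x, u, hv, hu, rfl⟩) hV
    · exact Or.inl (hP.ext_closed w W V h fun a ha hm => hV a ha (Or.inl ⟨rfl, hm⟩))
    · refine Or.inr ⟨v, x, u, hv, (hg x).ext_closed u W V hu fun a ha hm => ?_, rfl⟩
      exact hV a ha (Or.inr ⟨v, x, hv, (u ++ [a], none), hm, by simp⟩)

theorem IsXProc.xdetO {cs : List (A × XProc A X)} (hcs : ∀ c ∈ cs, IsXProc c.2) :
    IsXProc (xdetO cs) where
  nil_mem := Or.inl rfl
  prefix_closed w a := by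
    rintro (h | ⟨c, hc, ⟨s, o⟩, hs, hw⟩)
    · simp at h
    obtain ⟨hw, rfl⟩ := Prod.mk.inj hw
    rcases List.cons_eq_append_iff.1 hw.symm with ⟨rfl, -⟩ | ⟨u, rfl, rfl⟩
    · exact Or.inl rfl
    · exact Or.inr ⟨c, hc, (u, none), (hcs c hc).prefix_closed u a hs, rfl⟩
  xtrace_closed w x := by
    rintro (h | ⟨c, hc, ⟨s, o⟩, hs, hw⟩)
    · simp at h
    obtain ⟨rfl, rfl⟩ := Prod.mk.inj hw
    exact Or.inr ⟨c, hc, (s, none), (hcs c hc).xtrace_closed s x hs, rfl⟩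
  fail_trace w W := by
    rintro ⟨c, hc, u, rfl, hu⟩
    exact Or.inr ⟨c, hc, (u, none), (hcs c hc).fail_trace u W hu, rfl⟩
  subset_closed w W V := by
    rintro ⟨c, hc, u, rfl, hu⟩ hVW
    exact ⟨c, hc, u, rfl, (hcs c hc).subset_closed u W V hu hVW⟩
  ext_closed w W V := by
    rintro ⟨c, hc, u, rfl, hu⟩ hV
    refine ⟨c, hc, u, rfl, (hcs c hc).ext_closed u W V hu fun a ha hm => ?_⟩
    exact hV a ha (Or.inr ⟨c, hc, (u ++ [a], none), hm, rfl⟩)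

theorem IsXProc.xdet {cs : List (A × XProc A X)} (hcs : ∀ c ∈ cs, IsXProc c.2) :
    IsXProc (xdet cs) := by
  have hO := IsXProc.xdetO hcs
  refine ⟨hO.nil_mem, hO.prefix_closed, hO.xtrace_closed, ?_, ?_, ?_⟩
  · rintro w W (⟨rfl, -⟩ | h)
    exacts [hO.nil_mem, hO.fail_trace w W h]
  · rintro w W V (⟨rfl, h⟩ | h) hVW
    exacts [Or.inl ⟨rfl, fun c hc hm => h c hc (hVW hm)⟩, Or.inr (hO.subset_closed w W V h hVW)]
  · rintro w W V (⟨rfl, h⟩ | h) hV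
    · refine Or.inl ⟨rfl, fun c hc hm => hm.elim (h c hc) fun hmV => hV c.1 hmV ?_⟩
      exact Or.inr ⟨c, hc, ([], none), (hcs c hc).nil_mem, rfl⟩
    · exact Or.inr (hO.ext_closed w W V h hV)

theorem XFinitary.sup {P Q : XProc A X} (hP : XFinitary P) (hQ : XFinitary Q) :
    XFinitary (P ⊔ Q) :=
  Set.Finite.union hP hQ

theorem xFinitary_xeta (x : X) : XFinitary (xeta A x) :=
  (Set.finite_singleton _).insert _

theorem XFinitary.xdetO {cs : List (A × XProc A X)} (hcs : ∀ c ∈ cs, XFinitary c.2) :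
    XFinitary (xdetO cs) := by
  refine (Set.finite_singleton _).union (Set.Finite.subset
    ((List.finite_toSet cs).biUnion fun c hc => (hcs c hc).image fun s => (c.1 :: s.1, s.2)) ?_)
  rintro t ⟨c, hc, s, hs, rfl⟩
  exact Set.mem_biUnion hc ⟨s, hs, rfl⟩

theorem XFinitary.xdet {cs : List (A × XProc A X)} (hcs : ∀ c ∈ cs, XFinitary c.2) :
    XFinitary (xdet cs) :=
  XFinitary.xdetO hcs

theorem XFinitary.dagger {g : X → XProc A Y} {P : XProc A X} (hP : XFinitary P)
    (hg : ∀ x : X, (∃ v : List A, (v, some x) ∈ P.1) → XFinitary (g x)) :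
    XFinitary (dagger g P) := by
  have hxtraces : {q : List A × X | (q.1, some q.2) ∈ P.1}.Finite :=
    hP.preimage fun q _ q' _ h => by simpa [Prod.ext_iff] using h
  refine (Set.Finite.subset (hP.image fun t => (t.1, none)) ?_).union
    (Set.Finite.subset (hxtraces.biUnion fun q hq =>
      (hg q.2 ⟨q.1, hq⟩).image fun s => (q.1 ++ s.1, s.2)) ?_)
  · rintro ⟨w, o⟩ ⟨rfl, hw⟩
    exact ⟨(w, none), hw, rfl⟩
  · rintro t ⟨v, x, hv, s, hs, rfl⟩
    exact Set.mem_biUnion (show (v, x) ∈ _ from hv) ⟨s, hs, rfl⟩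

def after (P : XProc A X) (a : A) : XProc A X :=
  ((fun t => (a :: t.1, t.2)) ⁻¹' P.1, (fun p => (a :: p.1, p.2)) ⁻¹' P.2)

theorem IsXProc.after {P : XProc A X} (hP : IsXProc P) {a : A}
    (ha : ([a], (none : Option X)) ∈ P.1) : IsXProc (after P a) where
  nil_mem := ha
  prefix_closed w b := hP.prefix_closed (a :: w) b
  xtrace_closed w := hP.xtrace_closed (a :: w)
  fail_trace w := hP.fail_trace (a :: w)
  subset_closed w := hP.subset_closed (a :: w)
  ext_closed w W V h hV := hP.ext_closed (a :: w) W V h hV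

theorem cons_fst_injective (a : A) :
    Function.Injective fun t : List A × Option X => (a :: t.1, t.2) :=
  fun _ _ h => by simpa [Prod.ext_iff] using h

theorem XFinitary.after {P : XProc A X} (hP : XFinitary P) (a : A) : XFinitary (after P a) :=
  hP.preimage (cons_fst_injective a).injOn

theorem ncard_after_lt {P : XProc A X} (hP : IsXProc P) (hPfin : XFinitary P) (a : A) :
    (after P a).1.ncard < P.1.ncard :=
  calc (after P a).1.ncard ≤ (P.1 \ {([], none)}).ncard :=
        Set.ncard_le_ncard_of_injOn _ (fun t ht => ⟨ht, by simp⟩)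
          (cons_fst_injective a).injOn hPfin.sdiff
    _ < P.1.ncard := Set.ncard_sdiff_singleton_lt_of_mem hP.nil_mem hPfin

noncomputable def branches (P : XProc A X) (S : Finset A) : List (A × XProc A X) :=
  S.toList.map fun a => (a, after P a)

theorem nodup_branches_map_fst (P : XProc A X) (S : Finset A) :
    ((branches P S).map Prod.fst).Nodup := by
  simpa [branches, Function.comp_def] using S.nodup_toList

section Branches

variable (P : XProc A X) (S : Finset A) (a : A) (w : List A) (o : Option X) (W : Set A)

theorem xdet_fst (cs : List (A × XProc A X)) : (xdet cs).1 = (xdetO cs).1 := rfl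

theorem nil_mem_xdetO_fst_iff (cs : List (A × XProc A X)) :
    ([], o) ∈ (xdetO cs).1 ↔ o = none := by
  simp [xdetO]

theorem nil_notMem_xdetO_snd (cs : List (A × XProc A X)) : ([], W) ∉ (xdetO cs).2 := by
  simp [xdetO]

theorem nil_mem_xdet_branches_snd_iff :
    ([], W) ∈ (xdet (branches P S)).2 ↔ ∀ b ∈ S, b ∉ W := by
  simp [xdet, branches]

theorem cons_mem_xdetO_branches_fst_iff :
    (a :: w, o) ∈ (xdetO (branches P S)).1 ↔ a ∈ S ∧ (a :: w, o) ∈ P.1 := by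
  simp [xdetO, branches, after]

theorem cons_mem_xdetO_branches_snd_iff :
    (a :: w, W) ∈ (xdetO (branches P S)).2 ↔ a ∈ S ∧ (a :: w, W) ∈ P.2 := by
  simp [xdetO, branches, after]

theorem cons_mem_xdet_branches_snd_iff :
    (a :: w, W) ∈ (xdet (branches P S)).2 ↔ a ∈ S ∧ (a :: w, W) ∈ P.2 := by
  simp [xdet, branches, after]

end Branches

theorem mem_foldr_sup_fst {p : XProc A X} {l : List (XProc A X)} {t : List A × Option X} :
    t ∈ (l.foldr (· ⊔ ·) p).1 ↔ t ∈ p.1 ∨ ∃ q ∈ l, t ∈ q.1 := by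
  induction l with
  | nil => simp
  | cons q l ih => simp only [List.foldr_cons, Prod.fst_sup, Set.sup_eq_union, Set.mem_union, ih,
      List.mem_cons, exists_eq_or_imp, or_left_comm]

theorem mem_foldr_sup_snd {p : XProc A X} {l : List (XProc A X)} {r : List A × Set A} :
    r ∈ (l.foldr (· ⊔ ·) p).2 ↔ r ∈ p.2 ∨ ∃ q ∈ l, r ∈ q.2 := by
  induction l with
  | nil => simp
  | cons q l ih => simp only [List.foldr_cons, Prod.snd_sup, Set.sup_eq_union, Set.mem_union, ih,
      List.mem_cons, exists_eq_or_imp, or_left_comm]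

theorem IsXProc.nil_mem_snd_iff [DecidableEq A] {P : XProc A X} (hP : IsXProc P) {I : Finset A}
    (hI : ∀ a, a ∈ I ↔ ([a], (none : Option X)) ∈ P.1) {W : Set A} :
    ([], W) ∈ P.2 ↔ ∃ R ⊆ I, ([], (R : Set A)) ∈ P.2 ∧ ∀ a ∈ I \ R, a ∉ W := by
  classical
  constructor
  · intro hW
    refine ⟨I.filter (· ∈ W), I.filter_subset _, hP.subset_closed _ _ _ hW fun a ha => ?_, ?_⟩
    · exact (Finset.mem_filter.1 ha).2
    · intro a ha haW
      simp_all
  · rintro ⟨R, -, hR, hRW⟩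
    have hext := hP.ext_closed [] R {a | a ∈ W ∧ ([a], none) ∉ P.1} hR fun a ha => ha.2
    refine hP.subset_closed _ _ _ hext fun a haW => ?_
    by_cases ha : ([a], (none : Option X)) ∈ P.1
    · by_contra haR
      exact hRW a (Finset.mem_sdiff.2 ⟨(hI a).2 ha, fun h => haR (Or.inl h)⟩) haW
    · exact Or.inr ⟨haW, ha⟩

theorem eq_foldr_sup_of_isXProc [DecidableEq A] {P : XProc A X} (hP : IsXProc P) {I : Finset A}
    (hI : ∀ a, a ∈ I ↔ ([a], (none : Option X)) ∈ P.1) {xs : Finset X}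
    (hxs : ∀ x, x ∈ xs ↔ ([], some x) ∈ P.1) {Rs : Finset (Finset A)}
    (hRs : ∀ R, R ∈ Rs ↔ R ⊆ I ∧ ([], (R : Set A)) ∈ P.2) :
    P = (Rs.toList.map (fun R => xdet (branches P (I \ R))) ++ xs.toList.map (xeta A)).foldr
      (· ⊔ ·) (xdetO (branches P I)) := by
  have hinit : ∀ {a u o}, (a :: u, o) ∈ P.1 → a ∈ I := fun h =>
    (hI _).2 (hP.mem_of_append_mem (u := [_]) (hP.mem_fst_none h))
  ext ⟨w, o⟩
  · simp only [mem_foldr_sup_fst, List.mem_append, List.mem_map, Finset.mem_toList, or_and_right,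
      exists_or, exists_exists_and_eq_and, xdet_fst]
    rcases w with _ | ⟨a, u⟩
    · cases o <;> simp [nil_mem_xdetO_fst_iff, xeta, hP.nil_mem, hxs]
    · simp only [cons_mem_xdetO_branches_fst_iff, xeta, Finset.mem_sdiff]
      refine ⟨fun h => Or.inl ⟨hinit h, h⟩, ?_⟩
      rintro (⟨-, h⟩ | ⟨-, -, -, h⟩ | ⟨x, -, h⟩)
      · exact h
      · exact h
      · simp at h
  · simp only [mem_foldr_sup_snd, List.mem_append, List.mem_map, Finset.mem_toList, or_and_right,
      exists_or, exists_exists_and_eq_and]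
    rcases w with _ | ⟨a, u⟩
    · rw [hP.nil_mem_snd_iff hI]
      simp [nil_notMem_xdetO_snd, nil_mem_xdet_branches_snd_iff, xeta, hRs, and_assoc]
    · simp only [cons_mem_xdetO_branches_snd_iff, cons_mem_xdet_branches_snd_iff, xeta]
      refine ⟨fun h => Or.inl ⟨hinit (hP.fail_trace _ _ h), h⟩, ?_⟩
      rintro (⟨-, h⟩ | ⟨-, -, -, h⟩ | ⟨x, -, h⟩)
      · exact h
      · exact h
      · exact h.elim

theorem _root_.List.apply_foldr_sup {α β : Type*} [Max α] [Max β] {S : α → Prop}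
    (hS : ∀ p q, S p → S q → S (p ⊔ q)) {f : α → β}
    (hf : ∀ p q, S p → S q → f (p ⊔ q) = f p ⊔ f q) {p : α} (hp : S p) {l : List α}
    (hl : ∀ q ∈ l, S q) : f (l.foldr (· ⊔ ·) p) = (l.map f).foldr (· ⊔ ·) (f p) := by
  suffices S (l.foldr (· ⊔ ·) p) ∧ f (l.foldr (· ⊔ ·) p) = (l.map f).foldr (· ⊔ ·) (f p) from
    this.2
  induction l with
  | nil => exact ⟨hp, rfl⟩
  | cons q l ih =>
    obtain ⟨hSl, hfl⟩ := ih fun r hr => hl r (List.mem_cons_of_mem q hr)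
    have hq := hl q List.mem_cons_self
    exact ⟨hS q _ hq hSl, by rw [List.foldr_cons, hf q _ hq hSl, hfl]; rfl⟩

theorem _root_.Set.Finite.exists_finset_mem_iff {β γ : Type*} {s : Set γ} (hs : s.Finite)
    {f : β → γ} (hf : f.Injective) : ∃ t : Finset β, ∀ b, b ∈ t ↔ f b ∈ s :=
  ⟨(hs.preimage hf.injOn).toFinset, fun b => by simp⟩

def FinitaryAgree (g : X → XProc A Y) (h : XProc A X → XProc A Y) (P : XProc A X) : Prop :=
  (IsXProc P ∧ XFinitary P) ∧ h P = dagger g P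

theorem finitaryAgree_xeta {g : X → XProc A Y} (hg : ∀ x, IsXProc (g x))
    {h : XProc A X → XProc A Y} (hη : ∀ x : X, h (xeta A x) = g x) (x : X) :
    FinitaryAgree g h (xeta A x) :=
  ⟨⟨isXProc_xeta x, xFinitary_xeta x⟩, (hη x).trans (dagger_xeta g hg x).symm⟩

theorem FinitaryAgree.xdet_and_xdetO {g : X → XProc A Y} {h : XProc A X → XProc A Y}
    (hdet : ∀ cs : List (A × XProc A X), (cs.map Prod.fst).Nodup →
      (∀ c ∈ cs, IsXProc c.2 ∧ XFinitary c.2) →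
      h (xdet cs) = xdet (cs.map (fun c => (c.1, h c.2))) ∧
      h (xdetO cs) = xdetO (cs.map (fun c => (c.1, h c.2))))
    {cs : List (A × XProc A X)} (hnd : (cs.map Prod.fst).Nodup)
    (hcs : ∀ c ∈ cs, FinitaryAgree g h c.2) :
    FinitaryAgree g h (xdet cs) ∧ FinitaryAgree g h (xdetO cs) := by
  have hproc : ∀ c ∈ cs, IsXProc c.2 := fun c hc => (hcs c hc).1.1
  have hfin : ∀ c ∈ cs, XFinitary c.2 := fun c hc => (hcs c hc).1.2
  have hmap : cs.map (fun c => (c.1, h c.2)) = cs.map (fun c => (c.1, dagger g c.2)) :=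
    List.map_congr_left fun c hc => by rw [(hcs c hc).2]
  obtain ⟨hxdet, hxdetO⟩ := hdet cs hnd fun c hc => (hcs c hc).1
  refine ⟨⟨⟨.xdet hproc, .xdet hfin⟩, ?_⟩, ⟨⟨.xdetO hproc, .xdetO hfin⟩, ?_⟩⟩
  · rw [hxdet, hmap, dagger_xdet]
  · rw [hxdetO, hmap, dagger_xdetO]

theorem FinitaryAgree.apply_foldr_sup_eq {g : X → XProc A Y} {h : XProc A X → XProc A Y}
    (hsup : ∀ P Q : XProc A X, IsXProc P → XFinitary P → IsXProc Q → XFinitary Q →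
      h (xintc P Q) = xintc (h P) (h Q))
    {p : XProc A X} (hp : FinitaryAgree g h p) {l : List (XProc A X)}
    (hl : ∀ q ∈ l, FinitaryAgree g h q) :
    h (l.foldr (· ⊔ ·) p) = dagger g (l.foldr (· ⊔ ·) p) := by
  rw [List.apply_foldr_sup (S := fun q => IsXProc q ∧ XFinitary q)
      (fun p q hp hq => ⟨hp.1.sup hq.1, hp.2.sup hq.2⟩)
      (fun p q hp hq => hsup p q hp.1 hp.2 hq.1 hq.2) hp.1 fun q hq => (hl q hq).1,
    dagger_foldr_sup, List.map_congr_left fun q hq => (hl q hq).2, hp.2]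

theorem hom_eq_dagger {g : X → XProc A Y} (hg : ∀ x, IsXProc (g x))
    {h : XProc A X → XProc A Y} (hη : ∀ x : X, h (xeta A x) = g x)
    (hsup : ∀ P Q : XProc A X, IsXProc P → XFinitary P → IsXProc Q → XFinitary Q →
      h (xintc P Q) = xintc (h P) (h Q))
    (hdet : ∀ cs : List (A × XProc A X), (cs.map Prod.fst).Nodup →
      (∀ c ∈ cs, IsXProc c.2 ∧ XFinitary c.2) →
      h (xdet cs) = xdet (cs.map (fun c => (c.1, h c.2))) ∧
      h (xdetO cs) = xdetO (cs.map (fun c => (c.1, h c.2))))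
    {P : XProc A X} (hP : IsXProc P) (hPfin : XFinitary P) : h P = dagger g P := by
  induction hn : P.1.ncard using Nat.strong_induction_on generalizing P with
  | _ n ih =>
  classical
  obtain ⟨I, hI⟩ := hPfin.exists_finset_mem_iff (f := fun a : A => ([a], (none : Option X)))
    fun a b hab => by simpa using hab
  obtain ⟨xs, hxs⟩ := hPfin.exists_finset_mem_iff (f := fun x : X => (([] : List A), some x))
    fun x y hxy => by simpa using hxy
  obtain ⟨Rs, hRs⟩ : ∃ Rs : Finset (Finset A), ∀ R, R ∈ Rs ↔ R ⊆ I ∧ ([], (R : Set A)) ∈ P.2 :=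
    ⟨I.powerset.filter fun R => ([], (R : Set A)) ∈ P.2, fun R => by simp⟩
  have hchoice (S : Finset A) (hS : S ⊆ I) :
      FinitaryAgree g h (xdet (branches P S)) ∧ FinitaryAgree g h (xdetO (branches P S)) := by
    refine FinitaryAgree.xdet_and_xdetO hdet (nodup_branches_map_fst P S) fun c hc => ?_
    obtain ⟨a, ha, rfl⟩ := List.mem_map.1 hc
    have hPa := hP.after ((hI a).1 (hS (Finset.mem_toList.1 ha)))
    exact ⟨⟨hPa, hPfin.after a⟩, ih _ (hn ▸ ncard_after_lt hP hPfin a) hPa (hPfin.after a) rfl⟩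
  rw [eq_foldr_sup_of_isXProc hP hI hxs hRs]
  refine FinitaryAgree.apply_foldr_sup_eq hsup (hchoice I subset_rfl).2 fun q hq => ?_
  rcases List.mem_append.1 hq with hq | hq
  · obtain ⟨R, -, rfl⟩ := List.mem_map.1 hq
    exact (hchoice _ Finset.sdiff_subset).1
  · obtain ⟨x, -, rfl⟩ := List.mem_map.1 hq
    exact finitaryAgree_xeta hg hη x

end

/-- `g†` is well defined on (finitary) `X`-processes, extends
`g` along `η`, is a homomorphism for `⊓`, `□_{a⃗}` and `□^Ω_{a⃗}`, and is the
unique such map on finitary `X`-processes. -/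
theorem dagger_characterisation {A X Y : Type*}
    (g : X → XProc A Y) (hg : ∀ x, IsXProc (g x)) :
    (∀ P : XProc A X, IsXProc P →
        IsXProc (dagger g P) ∧
        (XFinitary P → (∀ x : X, (∃ v : List A, (v, some x) ∈ P.1) →
            XFinitary (g x)) → XFinitary (dagger g P))) ∧
    (∀ x : X, dagger g (xeta A x) = g x) ∧
    (∀ P Q : XProc A X, IsXProc P → IsXProc Q →
        dagger g (xintc P Q) = xintc (dagger g P) (dagger g Q)) ∧
    (∀ cs : List (A × XProc A X), (cs.map Prod.fst).Nodup →
        (∀ c ∈ cs, IsXProc c.2) →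
        dagger g (xdet cs) = xdet (cs.map (fun c => (c.1, dagger g c.2))) ∧
        dagger g (xdetO cs) = xdetO (cs.map (fun c => (c.1, dagger g c.2)))) ∧
    (∀ h : XProc A X → XProc A Y,
        (∀ x : X, h (xeta A x) = g x) →
        (∀ P Q : XProc A X, IsXProc P → XFinitary P → IsXProc Q → XFinitary Q →
            h (xintc P Q) = xintc (h P) (h Q)) →
        (∀ cs : List (A × XProc A X), (cs.map Prod.fst).Nodup →
            (∀ c ∈ cs, IsXProc c.2 ∧ XFinitary c.2) →
            h (xdet cs) = xdet (cs.map (fun c => (c.1, h c.2))) ∧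
            h (xdetO cs) = xdetO (cs.map (fun c => (c.1, h c.2)))) →
        ∀ P : XProc A X, IsXProc P → XFinitary P → h P = dagger g P) := by
  refine ⟨fun P hP => ⟨hP.dagger hg, fun hPfin hgfin => hPfin.dagger hgfin⟩,
    dagger_xeta g hg, fun P Q _ _ => dagger_sup g P Q,
    fun cs _ _ => ⟨dagger_xdet g cs, dagger_xdetO g cs⟩, ?_⟩
  intro h hη hsup hdet P hP hPfin
  exact hom_eq_dagger hg hη hsup hdet hP hPfin

end CSP
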